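/- arXiv:2112.12211 — 2 statements merged into one kernel-verified Lean document; each statement's English description precedes it below -/
import Mathlib

section
/- Let α1,α2,β1,β2 ∈ ℂ be nonzero and let x, xa, xb, xc, xd ∈ ℂ with xa, xb ≠ 0. Let N := Lx2·x^2 + Lx1·x + Lx0 be the unnormalized type-A Lax matrix of A3_{(0)} at (x; xa,xb; (α1,α2),(β1,β2)), with entries N11, N12, N21, N22, and let c denote the coefficient of xd in A3_{(0)}(x; xa,xb,xc,xd; (α1,α2),(β1,β2)) (which is a polynomial of degree one in xd). Then the identity A3_{(0)}(x; xa,xb,xc,xd; (α1,α2),(β1,β2))·(N21·xc + N22) = c·(xd·(N21·xc + N22) − (N11·xc + N12)) holds. Consequently, whenever N21·xc + N22 ≠ 0 and c ≠ 0, the equation A3_{(0)}(x; xa,xb,xc,xd; (α1,α2),(β1,β2)) = 0 is solved uniquely for xd by the fractional-linear expression xd = (N11·xc + N12)/(N21·xc + N22). -/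
noncomputable section

open Matrix Complex

/-- The type-A face-centered quad polynomial `A3_{(δ)}`. -/
noncomputable def A3 (d x xa xb xc xd a1 a2 b1 b2 : ℂ) : ℂ :=
  d/4*(a1/a2-a2/a1)*(b1/b2-b2/b1)*(b1*b2/(a1*a2)-a1*a2/(b1*b2))*x
  + ((b1/b2-b2/b1)*(xa*xb-xc*xd) + (a1/a2-a2/a1)*(xa*xc-xb*xd)
      - (a1*a2/(b1*b2)-b1*b2/(a1*a2))*(xa*xd-xb*xc))*x
  + (a2/b1-b1/a2)*(xa*x^2-xb*xc*xd) - (a2/b2-b2/a2)*(xb*x^2-xa*xc*xd)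
  - (a1/b1-b1/a1)*(xc*x^2-xa*xb*xd) + (a1/b2-b2/a1)*(xd*x^2-xa*xb*xc)
  + d/4*((a1/b1-b1/a1)*(a2/b2-b2/a2)*((a1/b2-b2/a1)*xa+(a2/b1-b1/a2)*xd)
      - (a1/b2-b2/a1)*(a2/b1-b1/a2)*((a1/b1-b1/a1)*xb+(a2/b2-b2/a2)*xc))

/-- The type-C face-centered quad polynomial `C3_{(δ1;δ2;δ3)}`. -/
noncomputable def C3 (d1 d2 d3 x xa xb xc xd a1 a2 b1 b2 : ℂ) : ℂ :=
  (a2*(b1*xd-b2*xc) - d3*(a2^2*(b1*xb-b2*xa)+b1*b2*(b1*xa-b2*xb))/a1)*x^2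
  + a2*xa*xb*(b2*xd-b1*xc)
  + d1*a1*(b1*xb-b2*xa+a2^2*(xa/b2-xb/b1))
  + (a2^2*(xb*xc-xa*xd) + b1*b2*(xa*xc-xb*xd)
      + a2*(b2/b1-b1/b2)*(d1*a1 - d3*(b1*b2/a1)*xa*xb + d2*(b1*b2/a1)*xc*xd))*x
  + d2*((a2^2-b1^2)*(a2^2-b2^2)/(2*a2*b1*b2)*(b2*xd-b1*xc)
      + (xc*xd/a1)*(b1*b2*(b1*xb-b2*xa)+a2^2*(b1*xa-b2*xb)))

/-- The permutation matrix `P`. -/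
noncomputable def Pm : Matrix (Fin 2) (Fin 2) ℂ := !![0, 1; 1, 0]

/-- The matrix `M(u,v)` from the type-A Lax matrix of `A3_{(0)}`. -/
noncomputable def Mm (p1 p2 q1 q2 u v : ℂ) : Matrix (Fin 2) (Fin 2) ℂ :=
  (4:ℂ) • !![q1/p1-p1/q1, (p2/q1-q1/p2)*u+(q2/p2-p2/q2)*v; 0, q2/p1-p1/q2]

/-- The unnormalized type-A Lax matrix of `A3_{(0)}`. -/
noncomputable def NA3 (x xa xb p1 p2 q1 q2 : ℂ) : Matrix (Fin 2) (Fin 2) ℂ :=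
  x^2 • Mm p1 p2 q1 q2 xa xb
  + x • ((4:ℂ) • !![(p1/p2-p2/p1)*xa+(p1*p2/(q1*q2)-q1*q2/(p1*p2))*xb, (q1/q2-q2/q1)*xa*xb;
        q1/q2-q2/q1, (p1*p2/(q1*q2)-q1*q2/(p1*p2))*xa+(p1/p2-p2/p1)*xb])
  + (xa*xb) • (Pm * Mm p1 p2 q1 q2 (1/xa) (1/xb) * Pm)

/-- The normalization factor `D_LA` for the type-A Lax matrix of `A3_{(0)}`. -/
noncomputable def DA3 (x xa xb p1 p2 q1 q2 : ℂ) : ℂ :=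
  4*Complex.I*(p1^2-q1^2)*(q1*xa-p2*x)*(q2*x-p2*xb)/(p1*p2*q1*q2)

/-- The (normalized) type-A Lax matrix of `A3_{(0)}`. -/
noncomputable def laxA3 (x xa xb p1 p2 q1 q2 : ℂ) : Matrix (Fin 2) (Fin 2) ℂ :=
  (DA3 x xa xb p1 p2 q1 q2)⁻¹ • NA3 x xa xb p1 p2 q1 q2

/-- The type-C Lax matrix of `C3_{(δ1;δ2;δ3)}`. -/
noncomputable def laxC3 (d1 d2 d3 x xb xd p1 p2 q1 q2 : ℂ) : Matrix (Fin 2) (Fin 2) ℂ :=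
  p2 • (x^2 • (!![-q2, q1*xd; 0, 0]
        + d1 • ((2*d3*q1*q2/p1) • !![0, (q2/p2-p2/q2)*xb; 0, q1/p2-p2/q1]))
    + x • (!![p2*xb, -((q1*q2/p2)*xb*xd); -(q1*q2/p2), p2*xd]
        + d1 • (((2*q1*q2/p1)*(q2/q1-q1/q2)) • !![d2*xd, p1^2/(2*q1*q2); 0, d3*xb]))
    + (!![0, 0; q1*xb, -(q2*xb*xd)]
        + d1 • !![d2*q1*(q1/p2-p2/q1)*(p2/q2-q2/p2+2*(q2/p1)*xb*xd),
                   (q1/p2-p2/q1)*(p1*xb-d2*(p2/q2-q2/p2)*q2*xd);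
                   2*d2*(q2/p2-p2/q2)*(q1*q2/p1)*xd, p1*(q2/p2-p2/q2)]))

set_option maxHeartbeats 4000000 in
theorem statement8 (a1 a2 b1 b2 x xa xb xc xd : ℂ)
    (ha1 : a1 ≠ 0) (ha2 : a2 ≠ 0) (hb1 : b1 ≠ 0) (hb2 : b2 ≠ 0)
    (hxa : xa ≠ 0) (hxb : xb ≠ 0) :
    (A3 0 x xa xb xc xd a1 a2 b1 b2)
        * (NA3 x xa xb a1 a2 b1 b2 1 0 * xc + NA3 x xa xb a1 a2 b1 b2 1 1)
      = (A3 0 x xa xb xc 1 a1 a2 b1 b2 - A3 0 x xa xb xc 0 a1 a2 b1 b2)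
        * (xd * (NA3 x xa xb a1 a2 b1 b2 1 0 * xc + NA3 x xa xb a1 a2 b1 b2 1 1)
            - (NA3 x xa xb a1 a2 b1 b2 0 0 * xc + NA3 x xa xb a1 a2 b1 b2 0 1))
    ∧ (NA3 x xa xb a1 a2 b1 b2 1 0 * xc + NA3 x xa xb a1 a2 b1 b2 1 1 ≠ 0 →
        A3 0 x xa xb xc 1 a1 a2 b1 b2 - A3 0 x xa xb xc 0 a1 a2 b1 b2 ≠ 0 →
        (A3 0 x xa xb xc xd a1 a2 b1 b2 = 0 ↔
          xd = (NA3 x xa xb a1 a2 b1 b2 0 0 * xc + NA3 x xa xb a1 a2 b1 b2 0 1)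
              / (NA3 x xa xb a1 a2 b1 b2 1 0 * xc + NA3 x xa xb a1 a2 b1 b2 1 1))) := by
  have hD : a1*a2*b1*b2 ≠ 0 :=
    mul_ne_zero (mul_ne_zero (mul_ne_zero ha1 ha2) hb1) hb2
  have k1 : b1/b2 - b2/b1 = a1*a2*(b1^2-b2^2)/(a1*a2*b1*b2) := by field_simp
  have k2 : a1/a2 - a2/a1 = b1*b2*(a1^2-a2^2)/(a1*a2*b1*b2) := by field_simp
  have k3 : a1*a2/(b1*b2) - b1*b2/(a1*a2) = (a1^2*a2^2-b1^2*b2^2)/(a1*a2*b1*b2) := by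
    field_simp
  have k4 : a2/b1 - b1/a2 = a1*b2*(a2^2-b1^2)/(a1*a2*b1*b2) := by field_simp
  have k5 : a2/b2 - b2/a2 = a1*b1*(a2^2-b2^2)/(a1*a2*b1*b2) := by field_simp
  have k6 : a1/b1 - b1/a1 = a2*b2*(a1^2-b1^2)/(a1*a2*b1*b2) := by field_simp
  have k7 : a1/b2 - b2/a1 = a2*b1*(a1^2-b2^2)/(a1*a2*b1*b2) := by field_simp
  have k8 : b1/a1 - a1/b1 = a2*b2*(b1^2-a1^2)/(a1*a2*b1*b2) := by field_simp
  have k9 : b2/a1 - a1/b2 = a2*b1*(b2^2-a1^2)/(a1*a2*b1*b2) := by field_simp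
  have k10 : b2/a2 - a2/b2 = a1*b1*(b2^2-a2^2)/(a1*a2*b1*b2) := by field_simp
  have hinva : xa * (1/xa) = 1 := by field_simp
  have hinvb : xb * (1/xb) = 1 := by field_simp
  have hA : ∀ yd : ℂ, A3 0 x xa xb xc yd a1 a2 b1 b2
      = (a1*a2*(b1^2-b2^2)*(xa*xb-xc*yd)*x + b1*b2*(a1^2-a2^2)*(xa*xc-xb*yd)*x
        - (a1^2*a2^2-b1^2*b2^2)*(xa*yd-xb*xc)*x
        + a1*b2*(a2^2-b1^2)*(xa*x^2-xb*xc*yd) - a1*b1*(a2^2-b2^2)*(xb*x^2-xa*xc*yd)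
        - a2*b2*(a1^2-b1^2)*(xc*x^2-xa*xb*yd) + a2*b1*(a1^2-b2^2)*(yd*x^2-xa*xb*xc))
        / (a1*a2*b1*b2) := by
    intro yd
    simp only [A3]
    rw [k1, k2, k3, k4, k5, k6, k7]
    ring
  have e00 : NA3 x xa xb a1 a2 b1 b2 0 0
      = (4*a2*b2*(b1^2-a1^2)*x^2 + 4*(b1*b2*(a1^2-a2^2)*xa + (a1^2*a2^2-b1^2*b2^2)*xb)*x
        + 4*xa*xb*a2*b1*(b2^2-a1^2)) / (a1*a2*b1*b2) := by
    simp only [NA3, Mm, Pm, Matrix.add_apply, Matrix.smul_apply, Matrix.mul_apply,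
      Fin.sum_univ_two, Matrix.of_apply, Matrix.cons_val', Matrix.cons_val_zero,
      Matrix.cons_val_one, Matrix.head_cons, Matrix.empty_val', Matrix.cons_val_fin_one, Matrix.vecHead, Matrix.vecTail,
      smul_eq_mul]
    rw [k2, k3, k8, k9]
    ring
  have e01 : NA3 x xa xb a1 a2 b1 b2 0 1
      = (4*(a1*b2*(a2^2-b1^2)*xa + a1*b1*(b2^2-a2^2)*xb)*x^2
        + 4*a1*a2*(b1^2-b2^2)*xa*xb*x) / (a1*a2*b1*b2) := by
    simp only [NA3, Mm, Pm, Matrix.add_apply, Matrix.smul_apply, Matrix.mul_apply,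
      Fin.sum_univ_two, Matrix.of_apply, Matrix.cons_val', Matrix.cons_val_zero,
      Matrix.cons_val_one, Matrix.head_cons, Matrix.empty_val', Matrix.cons_val_fin_one, Matrix.vecHead, Matrix.vecTail,
      smul_eq_mul]
    rw [k1, k4, k10]
    ring
  have e10 : NA3 x xa xb a1 a2 b1 b2 1 0
      = (4*a1*a2*(b1^2-b2^2)*x
        + 4*(a1*b2*(a2^2-b1^2)*xb + a1*b1*(b2^2-a2^2)*xa)) / (a1*a2*b1*b2) := by
    simp only [NA3, Mm, Pm, Matrix.add_apply, Matrix.smul_apply, Matrix.mul_apply,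
      Fin.sum_univ_two, Matrix.of_apply, Matrix.cons_val', Matrix.cons_val_zero,
      Matrix.cons_val_one, Matrix.head_cons, Matrix.empty_val', Matrix.cons_val_fin_one, Matrix.vecHead, Matrix.vecTail,
      smul_eq_mul]
    rw [k1, k4, k10]
    linear_combination (4*xb*(a1*b2*(a2^2-b1^2))/(a1*a2*b1*b2)) * hinva
      + (4*xa*(a1*b1*(b2^2-a2^2))/(a1*a2*b1*b2)) * hinvb
  have e11 : NA3 x xa xb a1 a2 b1 b2 1 1
      = (4*a2*b1*(b2^2-a1^2)*x^2 + 4*((a1^2*a2^2-b1^2*b2^2)*xa + b1*b2*(a1^2-a2^2)*xb)*x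
        + 4*xa*xb*a2*b2*(b1^2-a1^2)) / (a1*a2*b1*b2) := by
    simp only [NA3, Mm, Pm, Matrix.add_apply, Matrix.smul_apply, Matrix.mul_apply,
      Fin.sum_univ_two, Matrix.of_apply, Matrix.cons_val', Matrix.cons_val_zero,
      Matrix.cons_val_one, Matrix.head_cons, Matrix.empty_val', Matrix.cons_val_fin_one, Matrix.vecHead, Matrix.vecTail,
      smul_eq_mul]
    rw [k2, k3, k8, k9]
    ring
  have key : (A3 0 x xa xb xc xd a1 a2 b1 b2)
        * (NA3 x xa xb a1 a2 b1 b2 1 0 * xc + NA3 x xa xb a1 a2 b1 b2 1 1)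
      = (A3 0 x xa xb xc 1 a1 a2 b1 b2 - A3 0 x xa xb xc 0 a1 a2 b1 b2)
        * (xd * (NA3 x xa xb a1 a2 b1 b2 1 0 * xc + NA3 x xa xb a1 a2 b1 b2 1 1)
            - (NA3 x xa xb a1 a2 b1 b2 0 0 * xc + NA3 x xa xb a1 a2 b1 b2 0 1)) := by
    rw [hA xd, hA 1, hA 0, e00, e01, e10, e11]
    ring
  refine ⟨key, fun hden hc => ?_⟩
  constructor
  · intro h
    rw [h, zero_mul] at key
    have h2 : xd * (NA3 x xa xb a1 a2 b1 b2 1 0 * xc + NA3 x xa xb a1 a2 b1 b2 1 1)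
        - (NA3 x xa xb a1 a2 b1 b2 0 0 * xc + NA3 x xa xb a1 a2 b1 b2 0 1) = 0 := by
      rcases mul_eq_zero.mp key.symm with h' | h'
      · exact absurd h' hc
      · exact h'
    rw [eq_div_iff hden]
    exact sub_eq_zero.mp h2
  · intro h
    have h2 : xd * (NA3 x xa xb a1 a2 b1 b2 1 0 * xc + NA3 x xa xb a1 a2 b1 b2 1 1)
        - (NA3 x xa xb a1 a2 b1 b2 0 0 * xc + NA3 x xa xb a1 a2 b1 b2 0 1) = 0 := by
      rw [h, div_mul_cancel₀ _ hden]; ring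
    rw [h2, mul_zero] at key
    exact (mul_eq_zero.mp key).resolve_right hden
end
end

section
/- (The exchanged type-A Lax matrix is proportional to the inverse.) Let α1,α2,β1,β2 ∈ ℂ be nonzero and let x, xa, xb ∈ ℂ with xa, xb ≠ 0. Denote by N(x; u,v; (p1,p2),(q1,q2)) := Lx2·x^2 + Lx1·x + Lx0 the unnormalized type-A Lax matrix of A3_{(0)}. Then there exists c ∈ ℂ such that N(x; xb,xa; (α1,α2),(β2,β1)) · N(x; xa,xb; (α1,α2),(β1,β2)) = c · I, where I is the 2×2 identity matrix. That is, interchanging xa with xb and exchanging the components of the second parameter pair produces a matrix proportional to the inverse of the original Lax matrix, reflecting the symmetry A3_{(0)}(x; xa,xb,xc,xd; (α1,α2),(β1,β2)) = −A3_{(0)}(x; xb,xa,xd,xc; (α1,α2),(β2,β1)). -/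
noncomputable section

open Matrix Complex

lemma scalar_of (M : Matrix (Fin 2) (Fin 2) ℂ) (h01 : M 0 1 = 0) (h10 : M 1 0 = 0)
    (hd : M 0 0 = M 1 1) : ∃ c : ℂ, M = c • (1 : Matrix (Fin 2) (Fin 2) ℂ) := by
  refine ⟨M 0 0, ?_⟩
  ext i j
  fin_cases i <;> fin_cases j <;> simp [Matrix.one_apply, h01, h10, ← hd]

lemma NA3_eq (x xa xb p1 p2 q1 q2 : ℂ) :
    NA3 x xa xb p1 p2 q1 q2 =
    !![x^2*(4*(q1/p1-p1/q1)) + x*(4*((p1/p2-p2/p1)*xa+(p1*p2/(q1*q2)-q1*q2/(p1*p2))*xb)) + xa*xb*(4*(q2/p1-p1/q2)),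
       x^2*(4*((p2/q1-q1/p2)*xa+(q2/p2-p2/q2)*xb)) + x*(4*((q1/q2-q2/q1)*xa*xb));
       x*(4*(q1/q2-q2/q1)) + xa*xb*(4*((p2/q1-q1/p2)*(1/xa)+(q2/p2-p2/q2)*(1/xb))),
       x^2*(4*(q2/p1-p1/q2)) + x*(4*((p1*p2/(q1*q2)-q1*q2/(p1*p2))*xa+(p1/p2-p2/p1)*xb)) + xa*xb*(4*(q1/p1-p1/q1))] := by
  ext i j
  fin_cases i <;> fin_cases j <;>
    simp [NA3, Mm, Pm, Matrix.mul_apply, Fin.sum_univ_two] <;> ring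

set_option maxHeartbeats 2000000 in
theorem statement18 (a1 a2 b1 b2 x xa xb : ℂ)
    (ha1 : a1 ≠ 0) (ha2 : a2 ≠ 0) (hb1 : b1 ≠ 0) (hb2 : b2 ≠ 0)
    (hxa : xa ≠ 0) (hxb : xb ≠ 0) :
    ∃ c : ℂ, NA3 x xb xa a1 a2 b2 b1 * NA3 x xa xb a1 a2 b1 b2
      = c • (1 : Matrix (Fin 2) (Fin 2) ℂ) := by
  rw [NA3_eq, NA3_eq]
  refine scalar_of _ ?_ ?_ ?_ <;> simp <;> field_simp <;> ring
end
end
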